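/- arXiv:1708.02110 — 2 statements merged into one kernel-verified Lean document; each statement's English description precedes it below -/
import Mathlib

section
/- Let ${}^2G = (G \to N)$ be a crossed module with $i : G \to N$ injective (identify $G$ with $i(G) \trianglelefteq N$), and let $\Delta$ be a poset with inflationary simplicial set $\Sigma_*(\Delta)$. The map $\mu_2$ sending a non-abelian 2-cocycle $(u,g)$ (maps $u : \Sigma_1(\Delta) \to N$, $g : \Sigma_2(\Delta) \to G$ with $i(g_c) = u_{\partial_0 c} u_{\partial_2 c} u_{\partial_1 c}^{-1}$) to the 1-cocycle $b \mapsto u_b \bmod G$ with values in $N/G$ induces a bijection $\check H^2(\Delta, {}^2G) \to H^1(\Delta, N/G)$ on cohomology classes. -/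
/-- A 1-simplex of a poset `Δ` from `x` to `y` (`∂₁ = x`, `∂₀ = y`, `|b| = supp`). -/
structure Seg (Δ : Type*) [PartialOrder Δ] (x y : Δ) where
  supp : Δ
  hx : x ≤ supp
  hy : y ≤ supp

/-- A 2-simplex of a poset `Δ`: vertices `x, y, z`, faces `e₂ : x → y`, `e₀ : y → z`,
`e₁ : x → z` (the face-matching conditions are encoded in the typing), and a support
dominating the supports of the faces. -/
structure Tri (Δ : Type*) [PartialOrder Δ] where
  x : Δ
  y : Δ
  z : Δ
  e2 : Seg Δ x y
  e0 : Seg Δ y z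
  e1 : Seg Δ x z
  supp : Δ
  h0 : e0.supp ≤ supp
  h1 : e1.supp ≤ supp
  h2 : e2.supp ≤ supp

/-- A non-abelian 2-cocycle `(u, g)` on `Δ` with coefficients in the crossed module
`i : G →* N`: `i(g_c) = u_{∂₀c} · u_{∂₂c} · u_{∂₁c}⁻¹` for all 2-simplices `c`. -/
def IsZ2 {Δ : Type*} [PartialOrder Δ] {G N : Type*} [Group G] [Group N] (i : G →* N)
    (u : ∀ x y : Δ, Seg Δ x y → N) (g : Tri Δ → G) : Prop :=
  ∀ c : Tri Δ, i (g c) = u c.y c.z c.e0 * u c.x c.y c.e2 * (u c.x c.z c.e1)⁻¹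

/-- Two non-abelian 2-cocycles are cohomologous: there are `v : Σ₀ → N`, `h : Σ₁ → G` with
`u'_b = i(h_b) · v_{∂₀b} · u_b · v_{∂₁b}⁻¹` and
`g'_c = β_{u'_{∂₀c}}(h_{∂₂c}) · h_{∂₀c} · β_{v_{∂₀₁c}}(g_c) · h_{∂₁c}⁻¹`. -/
def Coh2 {Δ : Type*} [PartialOrder Δ] {G N : Type*} [Group G] [Group N]
    (i : G →* N) (β : N →* MulAut G)
    (u : ∀ x y : Δ, Seg Δ x y → N) (g : Tri Δ → G)
    (u' : ∀ x y : Δ, Seg Δ x y → N) (g' : Tri Δ → G) : Prop :=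
  ∃ (v : Δ → N) (h : ∀ x y : Δ, Seg Δ x y → G),
    (∀ (x y : Δ) (s : Seg Δ x y), u' x y s = i (h x y s) * v y * u x y s * (v x)⁻¹) ∧
    (∀ c : Tri Δ,
      g' c = β (u' c.y c.z c.e0) (h c.x c.y c.e2) * h c.y c.z c.e0 *
        β (v c.z) (g c) * (h c.x c.z c.e1)⁻¹)

/-- A 1-cocycle with values in `N/G`, given by a representative map `w : Σ₁ → N`:
the cocycle identity holds modulo `i(G)`. -/
def IsZ1ModG {Δ : Type*} [PartialOrder Δ] {G N : Type*} [Group G] [Group N] (i : G →* N)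
    (w : ∀ x y : Δ, Seg Δ x y → N) : Prop :=
  ∀ c : Tri Δ, ∃ g : G, w c.x c.z c.e1 = i g * (w c.y c.z c.e0 * w c.x c.y c.e2)

/-- Two `N/G`-valued 1-cocycles (given by representatives) are cohomologous:
`ζ_{∂₀b} · w_b · ζ_{∂₁b}⁻¹ = w'_b` modulo `i(G)` for some 0-cochain `ζ`. -/
def Coh1ModG {Δ : Type*} [PartialOrder Δ] {G N : Type*} [Group G] [Group N] (i : G →* N)
    (w w' : ∀ x y : Δ, Seg Δ x y → N) : Prop :=
  ∃ ζ : Δ → N, ∀ (x y : Δ) (s : Seg Δ x y),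
    ∃ g : G, w' x y s = i g * (ζ y * w x y s * (ζ x)⁻¹)

/-
Since `i` is injective, the 2-cochain `g` of a 2-cocycle `(u, g)` is determined by `u`: it is
the unique preimage of the defect `u_{∂₀c} u_{∂₂c} u_{∂₁c}⁻¹`, which lies in `i(G)` exactly when
`u mod G` is a 1-cocycle. So every `N/G`-cocycle lifts, and a 1-cochain relating `u mod G` and
`u' mod G` lifts to `(v, h)` with `u' = i(h) v u v⁻¹`; the relation between `g` and `g'` then
holds automatically: its image under `i` telescopes, using the defining identities of `g` and `g'`.
-/

section Cocycles

variable {Δ : Type*} [PartialOrder Δ] {G N : Type*} [Group G] [Group N] {i : G →* N}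

theorem IsZ2.isZ1ModG {u : ∀ x y : Δ, Seg Δ x y → N} {g : Tri Δ → G} (hz : IsZ2 i u g) :
    IsZ1ModG i u := fun c => ⟨(g c)⁻¹, by rw [map_inv, hz c]; group⟩

theorem IsZ1ModG.exists_isZ2 {w : ∀ x y : Δ, Seg Δ x y → N} (hw : IsZ1ModG i w) :
    ∃ g : Tri Δ → G, IsZ2 i w g := by
  choose g hg using hw
  exact ⟨fun c => (g c)⁻¹, fun c => by rw [map_inv, hg c]; group⟩

theorem Coh1ModG.refl (w : ∀ x y : Δ, Seg Δ x y → N) : Coh1ModG i w w :=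
  ⟨1, fun _ _ _ => ⟨1, by simp⟩⟩

theorem Coh2.coh1ModG {β : N →* MulAut G} {u u' : ∀ x y : Δ, Seg Δ x y → N}
    {g g' : Tri Δ → G} (hc : Coh2 i β u g u' g') : Coh1ModG i u u' := by
  obtain ⟨v, h, hu, -⟩ := hc
  exact ⟨v, fun x y s => ⟨h x y s, by rw [hu x y s]; group⟩⟩

theorem Coh1ModG.coh2 {β : N →* MulAut G} (hi : ∀ (u : N) (g : G), i (β u g) = u * i g * u⁻¹)
    (hinj : Function.Injective i) {u u' : ∀ x y : Δ, Seg Δ x y → N} {g g' : Tri Δ → G}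
    (hz : IsZ2 i u g) (hz' : IsZ2 i u' g') (hc : Coh1ModG i u u') : Coh2 i β u g u' g' := by
  obtain ⟨ζ, hζ⟩ := hc
  choose h hh using hζ
  have hih : ∀ x y (s : Seg Δ x y), i (h x y s) = u' x y s * ζ x * (u x y s)⁻¹ * (ζ y)⁻¹ :=
    fun x y s => by rw [hh x y s]; group
  refine ⟨ζ, h, fun x y s => by rw [hh x y s]; group, fun c => hinj ?_⟩
  simp only [hz' c, map_mul, map_inv, hi, hih, hz c]
  group

end Cocycles

theorem mu2_induces_bijection_on_cohomology_general {Δ : Type*} [PartialOrder Δ]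
    {G N : Type*} [Group G] [Group N] (i : G →* N) (β : N →* MulAut G)
    (hi : ∀ (u : N) (g : G), i (β u g) = u * i g * u⁻¹)
    (hinj : Function.Injective i) :
    -- μ₂ maps 2-cocycles to N/G-valued 1-cocycles
    (∀ (u : ∀ x y : Δ, Seg Δ x y → N) (g : Tri Δ → G),
        IsZ2 i u g → IsZ1ModG i u) ∧
    -- μ₂ is well defined and injective on cohomology classes
    (∀ (u : ∀ x y : Δ, Seg Δ x y → N) (g : Tri Δ → G)
       (u' : ∀ x y : Δ, Seg Δ x y → N) (g' : Tri Δ → G),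
        IsZ2 i u g → IsZ2 i u' g' →
        (Coh2 i β u g u' g' ↔ Coh1ModG i u u')) ∧
    -- μ₂ is surjective on cohomology classes
    (∀ w : ∀ x y : Δ, Seg Δ x y → N, IsZ1ModG i w →
        ∃ (u : ∀ x y : Δ, Seg Δ x y → N) (g : Tri Δ → G),
          IsZ2 i u g ∧ Coh1ModG i u w) := by
  refine ⟨fun _ _ hz => hz.isZ1ModG,
    fun _ _ _ _ hz hz' => ⟨Coh2.coh1ModG, Coh1ModG.coh2 hi hinj hz hz'⟩, fun w hw => ?_⟩
  obtain ⟨g, hg⟩ := hw.exists_isZ2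
  exact ⟨w, g, hg, Coh1ModG.refl w⟩

/-- For a crossed module `(G ⟶ N)` with `i` injective, the map `μ₂` sending a
non-abelian 2-cocycle `(u, g)` to the `N/G`-valued 1-cocycle `b ↦ u_b mod G` induces a
bijection `Ȟ²(Δ, ²G) → H¹(Δ, N/G)`: it is compatible with the cohomology relations in both
directions, and every class in `H¹(Δ, N/G)` is attained. -/
theorem mu2_induces_bijection_on_cohomology {Δ : Type*} [PartialOrder Δ]
    {G N : Type*} [Group G] [Group N] (i : G →* N) (β : N →* MulAut G)
    (hi : ∀ (u : N) (g : G), i (β u g) = u * i g * u⁻¹)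
    (hb : ∀ g h : G, β (i g) h = g * h * g⁻¹)
    (hinj : Function.Injective i) :
    -- μ₂ maps 2-cocycles to N/G-valued 1-cocycles
    (∀ (u : ∀ x y : Δ, Seg Δ x y → N) (g : Tri Δ → G),
        IsZ2 i u g → IsZ1ModG i u) ∧
    -- μ₂ is well defined and injective on cohomology classes
    (∀ (u : ∀ x y : Δ, Seg Δ x y → N) (g : Tri Δ → G)
       (u' : ∀ x y : Δ, Seg Δ x y → N) (g' : Tri Δ → G),
        IsZ2 i u g → IsZ2 i u' g' →
        (Coh2 i β u g u' g' ↔ Coh1ModG i u u')) ∧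
    -- μ₂ is surjective on cohomology classes
    (∀ w : ∀ x y : Δ, Seg Δ x y → N, IsZ1ModG i w →
        ∃ (u : ∀ x y : Δ, Seg Δ x y → N) (g : Tri Δ → G),
          IsZ2 i u g ∧ Coh1ModG i u w) :=
  mu2_induces_bijection_on_cohomology_general i β hi hinj
end

section
/- Let ${}^2G = (G \to N)$ be a crossed module with $i$ injective, and let $w$ be a 1-cocycle on a poset $\Delta$ with values in $N/G$. Then there exists a non-abelian 2-cocycle $(u,g) \in \check Z^2(\Delta, {}^2G)$ with $u_b \bmod G = w_b$ for all $b$, which moreover can be chosen to be a twisted connection, i.e., $u_{\bar b} = u_b^{-1}$ for all 1-simplices $b$, where $\bar b$ is the reversed simplex. -/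
/-- The reversed 1-simplex (swapping `∂₀` and `∂₁`, keeping the support). -/
def Seg.rev {Δ : Type*} [PartialOrder Δ] {x y : Δ} (s : Seg Δ x y) : Seg Δ y x :=
  ⟨s.supp, s.hy, s.hx⟩

/-!
Modulo the normal subgroup `i(G)`, the 1-cocycle condition on `w` becomes an honest 1-cocycle
`w̄` with values in `N ⧸ i(G)`, and every 1-cocycle satisfies `w̄_{b̄} = w̄_b⁻¹` and is trivial on
degenerate simplices. Choosing a well-ordering of `Δ`, keep `w_b` on the simplices oriented
upwards, take `w_{b̄}⁻¹` on those oriented downwards and `1` on degenerate ones: this `u` is a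
twisted connection with `ū = w̄`, so `u_{∂₀c} u_{∂₂c} u_{∂₁c}⁻¹` vanishes in `N ⧸ i(G)`, i.e. it
is `i(g_c)` for some `g_c`.
-/

@[simp]
theorem Seg.rev_rev {Δ : Type*} [PartialOrder Δ] {x y : Δ} (s : Seg Δ x y) : s.rev.rev = s :=
  rfl

section Cocycle

variable {Δ : Type*} [PartialOrder Δ] {Q : Type*} [Group Q]

def IsZ1 (w : ∀ x y : Δ, Seg Δ x y → Q) : Prop :=
  ∀ c : Tri Δ, w c.x c.z c.e1 = w c.y c.z c.e0 * w c.x c.y c.e2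

namespace IsZ1

variable {w : ∀ x y : Δ, Seg Δ x y → Q}

theorem apply_self (hw : IsZ1 w) (x : Δ) (s : Seg Δ x x) : w x x s = 1 := by
  have h := hw ⟨x, x, x, s, s, s, s.supp, le_rfl, le_rfl, le_rfl⟩
  exact left_eq_mul.mp h

theorem apply_rev (hw : IsZ1 w) {x y : Δ} (s : Seg Δ x y) : w y x s.rev = (w x y s)⁻¹ := by
  have h := hw ⟨x, y, x, s, s.rev, ⟨s.supp, s.hx, s.hx⟩, s.supp, le_rfl, le_rfl, le_rfl⟩
  rw [hw.apply_self] at h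
  exact eq_inv_of_mul_eq_one_left h.symm

end IsZ1

end Cocycle

section Antisymmetrize

variable {Δ : Type*} [PartialOrder Δ] {N : Type*} [Group N]

open Classical in
noncomputable def antisymmetrize (r : Δ → Δ → Prop) (w : ∀ x y : Δ, Seg Δ x y → N) :
    ∀ x y : Δ, Seg Δ x y → N :=
  fun x y s => if x = y then 1 else if r x y then w x y s else (w y x s.rev)⁻¹

variable (r : Δ → Δ → Prop) (w : ∀ x y : Δ, Seg Δ x y → N)

theorem antisymmetrize_rev [Std.Trichotomous r] [Std.Asymm r] {x y : Δ} (s : Seg Δ x y) :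
    antisymmetrize r w y x s.rev = (antisymmetrize r w x y s)⁻¹ := by
  unfold antisymmetrize
  by_cases hxy : x = y
  · subst hxy
    simp
  by_cases hr : r x y
  · simp [hxy, Ne.symm hxy, hr, asymm hr]
  · have hr' : r y x := ((trichotomous_of r x y).resolve_left hr).resolve_left hxy
    simp [hxy, Ne.symm hxy, hr, hr']

theorem map_antisymmetrize {Q : Type*} [Group Q] (f : N →* Q)
    (hw : IsZ1 fun x y s => f (w x y s)) {x y : Δ} (s : Seg Δ x y) :
    f (antisymmetrize r w x y s) = f (w x y s) := by
  unfold antisymmetrize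
  split_ifs with hxy hr
  · subst hxy
    rw [map_one, hw.apply_self]
  · rfl
  · rw [map_inv, hw.apply_rev s, inv_inv]

end Antisymmetrize

section CrossedModule

variable {G N : Type*} [Group G] [Group N] {i : G →* N}

theorem MonoidHom.normal_range_of_conj_mem (h : ∀ (n : N) (g : G), n * i g * n⁻¹ ∈ i.range) :
    i.range.Normal :=
  ⟨fun _ ⟨g, hg⟩ n => hg ▸ h n g⟩

variable [i.range.Normal]

theorem exists_eq_apply_mul_of_mk'_eq {a b : N}
    (h : QuotientGroup.mk' i.range a = QuotientGroup.mk' i.range b) : ∃ g, a = i g * b := by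
  obtain ⟨g, hg⟩ := QuotientGroup.eq_iff_div_mem.mp h
  exact ⟨g, by rw [hg, div_mul_cancel]⟩

variable {Δ : Type*} [PartialOrder Δ]

theorem IsZ1ModG.isZ1_mk' {w : ∀ x y : Δ, Seg Δ x y → N} (hw : IsZ1ModG i w) :
    IsZ1 fun x y s => QuotientGroup.mk' i.range (w x y s) := by
  intro c
  obtain ⟨g, hg⟩ := hw c
  have hg1 : QuotientGroup.mk' i.range (i g) = 1 :=
    (QuotientGroup.eq_one_iff _).mpr ⟨g, rfl⟩
  dsimp only
  rw [hg, map_mul, hg1, one_mul, map_mul]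

theorem exists_isZ2_of_isZ1_mk' {u : ∀ x y : Δ, Seg Δ x y → N}
    (hu : IsZ1 fun x y s => QuotientGroup.mk' i.range (u x y s)) : ∃ g, IsZ2 i u g := by
  have h : ∀ c : Tri Δ, u c.y c.z c.e0 * u c.x c.y c.e2 * (u c.x c.z c.e1)⁻¹ ∈ i.range := by
    intro c
    rw [← QuotientGroup.eq_one_iff, ← QuotientGroup.mk'_apply, map_mul, map_inv, map_mul,
      mul_inv_eq_one]
    exact (hu c).symm
  choose g hg using h
  exact ⟨g, hg⟩

end CrossedModule

theorem lift_of_modG_cocycle_to_twisted_connection_general {Δ : Type*} [PartialOrder Δ]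
    {G N : Type*} [Group G] [Group N] (i : G →* N) (β : N →* MulAut G)
    (hi : ∀ (u : N) (g : G), i (β u g) = u * i g * u⁻¹)
    (w : ∀ x y : Δ, Seg Δ x y → N) (hw : IsZ1ModG i w) :
    ∃ (u : ∀ x y : Δ, Seg Δ x y → N) (g : Tri Δ → G),
      IsZ2 i u g ∧
      (∀ (x y : Δ) (s : Seg Δ x y), ∃ g0 : G, u x y s = i g0 * w x y s) ∧
      (∀ (x y : Δ) (s : Seg Δ x y), u y x s.rev = (u x y s)⁻¹) := by
  have := i.normal_range_of_conj_mem fun n g => ⟨β n g, hi n g⟩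
  have hw' := hw.isZ1_mk'
  set u := antisymmetrize WellOrderingRel w
  have hu : ∀ x y (s : Seg Δ x y),
      QuotientGroup.mk' i.range (u x y s) = QuotientGroup.mk' i.range (w x y s) :=
    fun _ _ s => map_antisymmetrize _ w _ hw' s
  obtain ⟨g, hg⟩ := exists_isZ2_of_isZ1_mk' (i := i) (u := u) (by simpa only [hu] using hw')
  exact ⟨u, g, hg, fun _ _ s => exists_eq_apply_mul_of_mk'_eq (hu _ _ s),
    fun _ _ s => antisymmetrize_rev _ w s⟩

/-- For a crossed module with `i` injective and a 1-cocycle `w` with values in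
`N/G`, there is a non-abelian 2-cocycle `(u, g)` lifting `w` (`u_b ≡ w_b mod G`) which is a
twisted connection: `u_{b̄} = u_b⁻¹` for all 1-simplices `b`. -/
theorem lift_of_modG_cocycle_to_twisted_connection {Δ : Type*} [PartialOrder Δ]
    {G N : Type*} [Group G] [Group N] (i : G →* N) (β : N →* MulAut G)
    (hi : ∀ (u : N) (g : G), i (β u g) = u * i g * u⁻¹)
    (hb : ∀ g h : G, β (i g) h = g * h * g⁻¹)
    (hinj : Function.Injective i)
    (w : ∀ x y : Δ, Seg Δ x y → N) (hw : IsZ1ModG i w) :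
    ∃ (u : ∀ x y : Δ, Seg Δ x y → N) (g : Tri Δ → G),
      IsZ2 i u g ∧
      (∀ (x y : Δ) (s : Seg Δ x y), ∃ g0 : G, u x y s = i g0 * w x y s) ∧
      (∀ (x y : Δ) (s : Seg Δ x y), u y x s.rev = (u x y s)⁻¹) :=
  lift_of_modG_cocycle_to_twisted_connection_general i β hi w hw
end
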